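/- Let x_1,...,x_n ∈ R^d (n ≥ 2) with x_1 + ... + x_n = 0 and partial sums s_i = x_1 + ... + x_i, and let A : R^n → R^d be the linear map with A e_i = x_i. For indices 1 ≤ i_1 < ... < i_k ≤ n-1, the origin lies in the convex hull of {s_{i_1},...,s_{i_k}} if and only if the (k+1)-dimensional face F of the cone C^A = {β : β_1 ≥ ... ≥ β_n} indexed by (i_1,...,i_k) satisfies F ∩ L_0 ∩ ker A ≠ {0}, where L_0 = {β : β_1 + ... + β_n = 0}. -/

import Mathlib

/-!
A point `β` of the face `F` indexed by `i_1 < ... < i_k` is determined, up to an additive constant,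
by its jumps `w_l = β_{i_l} - β_{i_l + 1} ≥ 0`: it is the constant plus the step function
`i ↦ ∑_{l : i ≤ i_l} w_l`. Exchanging the order of summation turns `A` of that step function into
`∑_l w_l s_{i_l}`, while `A` kills constants because `∑ x_i = 0`. So `β ∈ ker A` exactly when the
jumps are the coefficients of a vanishing nonnegative combination of the `s_{i_l}`, and `β ≠ 0`
exactly when the jumps are not all zero (the constant is pinned down by `β ∈ L_0`).
-/

open Finset

lemma zero_mem_convexHull_range_iff {κ E : Type*} [Fintype κ] [AddCommGroup E] [Module ℝ E]
    (v : κ → E) :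
    (0 : E) ∈ convexHull ℝ (Set.range v) ↔ ∃ w : κ → ℝ, 0 < w ∧ ∑ l, w l • v l = 0 := by
  classical
  constructor
  · rw [convexHull_range_eq_exists_affineCombination]
    rintro ⟨S, w, hw₀, hw₁, hw⟩
    rw [affineCombination_eq_linear_combination S v w hw₁] at hw
    set w' : κ → ℝ := fun l => if l ∈ S then w l else 0
    have hw'₁ : ∑ l, w' l = 1 := by simpa [w', sum_ite_mem] using hw₁
    refine ⟨w', lt_of_le_of_ne (fun l => ?_) fun h => by simp [← h] at hw'₁, ?_⟩
    · by_cases hl : l ∈ S <;> simp [w', hl, hw₀]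
    · simpa [w', ite_smul, sum_ite_mem] using hw
  · rintro ⟨w, hw, hwv⟩
    simpa [Finset.centerMass, hwv] using Finset.univ.centerMass_mem_convexHull
      (fun l _ => hw.le l) (Fintype.sum_pos hw) (fun l _ => Set.mem_range_self (f := v) l)

lemma sum_add_const_smul {κ R M : Type*} [Fintype κ] [Semiring R] [AddCommMonoid M] [Module R M]
    {x : κ → M} (hx : ∑ i, x i = 0) (β : κ → R) (c : R) :
    ∑ i, (β i + c) • x i = ∑ i, β i • x i := by
  simp [add_smul, sum_add_distrib, ← smul_sum, hx]

lemma Fin.apply_eq_apply_of_consecutive {n : ℕ} {X : Type*} {f : Fin n → X}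
    (h : ∀ (i : Fin n) (hi : (i : ℕ) + 1 < n), f i = f ⟨i + 1, hi⟩) (i j : Fin n) :
    f i = f j := by
  have hn : 0 < n := i.pos
  have eq_zeroth : ∀ (a : ℕ) (ha : a < n), f ⟨a, ha⟩ = f ⟨0, hn⟩ := by
    intro a
    induction a with
    | zero => intro _; rfl
    | succ a ih => intro ha; rw [← h ⟨a, by omega⟩ ha, ih]
  exact (eq_zeroth i i.2).trans (eq_zeroth j j.2).symm

section StepFun

variable {κ α R : Type*} [Fintype κ]

def stepFun [LE α] [DecidableLE α] [AddCommMonoid R] (ι : κ → α) (w : κ → R) (i : α) : R :=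
  ∑ l with i ≤ ι l, w l

lemma sum_stepFun_smul {M : Type*} [Fintype α] [Preorder α] [LocallyFiniteOrderBot α]
    [DecidableLE α] [Semiring R] [AddCommMonoid M] [Module R M] (ι : κ → α) (w : κ → R)
    (x : α → M) :
    ∑ i, stepFun ι w i • x i = ∑ l, w l • ∑ m ∈ Iic (ι l), x m := by
  simp only [stepFun, sum_smul, smul_sum, ← filter_ge_eq_Iic]
  rw [sum_comm' (t' := univ) (s' := fun l => {i | i ≤ ι l})]
  simp

lemma stepFun_antitone [Preorder α] [DecidableLE α] [AddCommMonoid R] [PartialOrder R]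
    [IsOrderedAddMonoid R] (ι : κ → α) {w : κ → R} (hw : 0 ≤ w) : Antitone (stepFun ι w) :=
  fun _ _ hij => sum_le_sum_of_subset_of_nonneg (fun _ => by simpa using hij.trans)
    fun l _ _ => hw l

lemma stepFun_of_forall_le [LE α] [DecidableLE α] [AddCommMonoid R] {ι : κ → α} (w : κ → R)
    {i : α} (h : ∀ l, i ≤ ι l) : stepFun ι w i = ∑ l, w l := by
  simp [stepFun, h]

lemma stepFun_of_forall_lt [Preorder α] [DecidableLE α] [AddCommMonoid R] {ι : κ → α}
    (w : κ → R) {i : α} (h : ∀ l, ι l < i) : stepFun ι w i = 0 := by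
  simp [stepFun, fun l => not_le_of_gt (h l)]

lemma stepFun_zero [LE α] [DecidableLE α] [AddCommMonoid R] (ι : κ → α) :
    stepFun ι (0 : κ → R) = 0 := by
  ext; simp [stepFun]

lemma stepFun_eq_stepFun_succ_add [AddCommMonoid R] {n : ℕ} (ι : κ → Fin n) (w : κ → R)
    (i : Fin n) (h : (i : ℕ) + 1 < n) :
    stepFun ι w i = stepFun ι w ⟨i + 1, h⟩ + ∑ l with ι l = i, w l := by
  simp only [stepFun, sum_filter, ← sum_add_distrib]
  refine sum_congr rfl fun l _ => ?_
  simp only [Fin.le_def, Fin.ext_iff]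
  split_ifs <;> first | omega | simp

lemma sub_stepFun_eq [AddCommGroup R] {n : ℕ} {ι : κ → Fin n} (hι : Function.Injective ι)
    (hι' : ∀ l, (ι l : ℕ) + 1 < n) {β : Fin n → R}
    (hgap : ∀ m : Fin n, (∀ l, ι l ≠ m) → ∀ h : (m : ℕ) + 1 < n, β m = β ⟨m + 1, h⟩)
    (i j : Fin n) :
    β i - stepFun ι (fun l => β (ι l) - β ⟨ι l + 1, hι' l⟩) i =
      β j - stepFun ι (fun l => β (ι l) - β ⟨ι l + 1, hι' l⟩) j := by
  set w := fun l => β (ι l) - β ⟨ι l + 1, hι' l⟩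
  refine Fin.apply_eq_apply_of_consecutive (f := fun i => β i - stepFun ι w i) (fun i h => ?_) i j
  rw [stepFun_eq_stepFun_succ_add ι _ i h]
  by_cases hi : ∃ l, ι l = i
  · obtain ⟨l, rfl⟩ := hi
    rw [sum_eq_single_of_mem l (by simp) fun l' hl' hne => absurd (hι (mem_filter.mp hl').2) hne]
    simp only [w]
    abel
  · push Not at hi
    rw [hgap i hi h, filter_false_of_mem fun l _ => hi l, sum_empty, add_zero]

end StepFun

section Face

variable {n k : ℕ} {M : Type*} [AddCommGroup M] [Module ℝ M] {x s : Fin n → M}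
  {ι : Fin k → Fin n}

lemma sum_smul_partialSum_eq (hs : ∀ i, s i = ∑ m ∈ Iic i, x m) (w : Fin k → ℝ) :
    ∑ l, w l • s (ι l) = ∑ i, stepFun ι w i • x i := by
  simp only [sum_stepFun_smul, hs]

lemma stepFun_last (hn : 0 < n) (hι' : ∀ l, (ι l : ℕ) + 1 < n) (w : Fin k → ℝ) :
    stepFun ι w ⟨n - 1, by omega⟩ = 0 :=
  stepFun_of_forall_lt w fun l => Fin.lt_def.mpr (by have := hι' l; simp only; omega)

lemma exists_face_vector_of_pos_combination (hn : 0 < n) (hx : ∑ i, x i = 0)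
    (hs : ∀ i, s i = ∑ m ∈ Iic i, x m) (hι' : ∀ l, (ι l : ℕ) + 1 < n) {w : Fin k → ℝ}
    (hw : 0 < w) (hws : ∑ l, w l • s (ι l) = 0) :
    ∃ β : Fin n → ℝ, β ≠ 0 ∧ (∑ i, β i) = 0 ∧ (∑ i, β i • x i) = 0 ∧
      (∀ i j : Fin n, i ≤ j → β j ≤ β i) ∧
      (∀ m : Fin n, (∀ l, ι l ≠ m) → ∀ h : (m : ℕ) + 1 < n, β m = β ⟨(m : ℕ) + 1, h⟩) := by
  set c := (∑ i, stepFun ι w i) / n with hc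
  refine ⟨fun i => stepFun ι w i - c, fun h => ?_, ?_, ?_, fun i j hij => ?_, fun m hm h => ?_⟩
  · have hfirst := congrFun h ⟨0, hn⟩
    have hlast := congrFun h ⟨n - 1, by omega⟩
    rw [stepFun_of_forall_le w fun l => Fin.le_def.mpr (Nat.zero_le _)] at hfirst
    rw [stepFun_last hn hι'] at hlast
    rw [Pi.zero_apply] at hfirst hlast
    linarith [Fintype.sum_pos hw]
  · rw [sum_sub_distrib, sum_const, card_univ, Fintype.card_fin, nsmul_eq_mul, hc,
      mul_div_cancel₀ _ (Nat.cast_ne_zero.mpr hn.ne'), sub_self]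
  · simp only [sub_eq_add_neg, sum_add_const_smul hx, ← sum_smul_partialSum_eq hs, hws]
  · exact sub_le_sub_right (stepFun_antitone ι hw.le hij) c
  · simp only [stepFun_eq_stepFun_succ_add ι w m h, filter_false_of_mem fun l _ => hm l,
      sum_empty, add_zero]

lemma exists_pos_combination_of_face_vector (hn : 0 < n) (hx : ∑ i, x i = 0)
    (hs : ∀ i, s i = ∑ m ∈ Iic i, x m) (hι : Function.Injective ι)
    (hι' : ∀ l, (ι l : ℕ) + 1 < n) {β : Fin n → ℝ} (hβ : β ≠ 0) (hβsum : ∑ i, β i = 0)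
    (hβx : ∑ i, β i • x i = 0) (hanti : ∀ i j : Fin n, i ≤ j → β j ≤ β i)
    (hgap : ∀ m : Fin n, (∀ l, ι l ≠ m) → ∀ h : (m : ℕ) + 1 < n, β m = β ⟨(m : ℕ) + 1, h⟩) :
    ∃ w : Fin k → ℝ, 0 < w ∧ ∑ l, w l • s (ι l) = 0 := by
  set last : Fin n := ⟨n - 1, by omega⟩
  set w : Fin k → ℝ := fun l => β (ι l) - β ⟨ι l + 1, hι' l⟩
  have hw : 0 ≤ w := fun l => sub_nonneg.mpr (hanti _ _ (Fin.le_def.mpr (Nat.le_succ _)))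
  have hβw (i : Fin n) : β i = stepFun ι w i + β last := by
    have := sub_stepFun_eq hι hι' hgap i last
    rw [stepFun_last hn hι'] at this
    linear_combination this
  refine ⟨w, lt_of_le_of_ne hw fun hw0 => hβ ?_, ?_⟩
  · have hconst (i : Fin n) : β i = β last := by simpa [← hw0, stepFun_zero] using hβw i
    have hβlast : β last = 0 := by
      simp only [hconst, sum_const, card_univ, Fintype.card_fin, nsmul_eq_mul] at hβsum
      exact (mul_eq_zero.mp hβsum).resolve_left (Nat.cast_ne_zero.mpr hn.ne')
    funext i
    rw [hconst, hβlast, Pi.zero_apply]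
  · rw [sum_smul_partialSum_eq hs, ← sum_add_const_smul hx _ (β last)]
    simpa [← hβw] using hβx

end Face

theorem stmt14_general (d n k : ℕ) (hn : 2 ≤ n)
    (x : Fin n → Fin d → ℝ) (hx : (∑ i, x i) = 0)
    (s : Fin n → Fin d → ℝ) (hs : ∀ i, s i = ∑ m ∈ Finset.Iic i, x m)
    (ι : Fin k → Fin n) (hι : StrictMono ι) (hι' : ∀ l, (ι l : ℕ) + 1 < n) :
    (0 : Fin d → ℝ) ∈ convexHull ℝ (Set.range fun l => s (ι l)) ↔
      ∃ β : Fin n → ℝ, β ≠ 0 ∧ (∑ i, β i) = 0 ∧ (∑ i, β i • x i) = 0 ∧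
        (∀ i j : Fin n, i ≤ j → β j ≤ β i) ∧
        (∀ m : Fin n, (∀ l, ι l ≠ m) →
          ∀ h : (m : ℕ) + 1 < n, β m = β ⟨(m : ℕ) + 1, h⟩) := by
  have hn₀ : 0 < n := by omega
  rw [zero_mem_convexHull_range_iff]
  constructor
  · rintro ⟨w, hw, hws⟩
    exact exists_face_vector_of_pos_combination hn₀ hx hs hι' hw hws
  · rintro ⟨β, hβ, hβsum, hβx, hanti, hgap⟩
    exact exists_pos_combination_of_face_vector hn₀ hx hs hι.injective hι' hβ hβsum hβx hanti hgap

/-- Let `x_1,...,x_n ∈ ℝ^d` (`n ≥ 2`) with `x_1 + ... + x_n = 0`, partial sums `s_i`,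
and `A : ℝ^n → ℝ^d` the linear map with `A e_i = x_i`, i.e. `A β = Σ_i β_i x_i`.
For `1 ≤ i_1 < ... < i_k ≤ n-1` (a strictly monotone `ι : Fin k → Fin n` avoiding the
last index), the origin lies in the convex hull of `{s_{i_1},...,s_{i_k}}` iff the
`(k+1)`-face `F` of `C^A = {β : β_1 ≥ ... ≥ β_n}` indexed by `(i_1,...,i_k)` satisfies
`F ∩ L_0 ∩ ker A ≠ {0}`, where `L_0 = {β : β_1 + ... + β_n = 0}`. -/
theorem stmt14 (d n k : ℕ) (hn : 2 ≤ n) (hk : 0 < k) (hkn : k ≤ n - 1)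
    (x : Fin n → Fin d → ℝ) (hx : (∑ i, x i) = 0)
    (s : Fin n → Fin d → ℝ) (hs : ∀ i, s i = ∑ m ∈ Finset.Iic i, x m)
    (ι : Fin k → Fin n) (hι : StrictMono ι) (hι' : ∀ l, (ι l : ℕ) + 1 < n) :
    (0 : Fin d → ℝ) ∈ convexHull ℝ (Set.range fun l => s (ι l)) ↔
      ∃ β : Fin n → ℝ, β ≠ 0 ∧ (∑ i, β i) = 0 ∧ (∑ i, β i • x i) = 0 ∧
        (∀ i j : Fin n, i ≤ j → β j ≤ β i) ∧
        (∀ m : Fin n, (∀ l, ι l ≠ m) →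
          ∀ h : (m : ℕ) + 1 < n, β m = β ⟨(m : ℕ) + 1, h⟩) :=
  stmt14_general d n k hn x hx s hs ι hι hι'
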